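/- Let X ⊆ ℤ² and let a, b ∈ X be the endpoints of a slanted digital line segment P ⊆ X. Let f : X → X be c₂-continuous with f(a) = a and f(b) = b. Then f(x) = x for every x ∈ P. -/

import Mathlib

/-- Two points of `ℤ²` are `c_u`-adjacent: they are distinct, differ by at most 1 in each
coordinate, and differ in at most `u` coordinates. -/
def adj2 (u : ℕ) (x y : ℤ × ℤ) : Prop :=
  x ≠ y ∧ |x.1 - y.1| ≤ 1 ∧ |x.2 - y.2| ≤ 1 ∧
    ((if x.1 = y.1 then 0 else 1) + (if x.2 = y.2 then 0 else 1) : ℕ) ≤ u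

/-- `f` is `c_u`-continuous on `X ⊆ ℤ²`. -/
def DigContinuous2 (u : ℕ) (X : Set (ℤ × ℤ)) (f : ℤ × ℤ → ℤ × ℤ) : Prop :=
  ∀ x ∈ X, ∀ y ∈ X, adj2 u x y → f x = f y ∨ adj2 u (f x) (f y)

/-- `A` is a freezing set for `(X, c_u)`: every `c_u`-continuous self-map of `X`
fixing `A` pointwise is the identity on `X`. -/
def FreezingSet2 (u : ℕ) (X A : Set (ℤ × ℤ)) : Prop :=
  A ⊆ X ∧ ∀ f : ℤ × ℤ → ℤ × ℤ, Set.MapsTo f X X → DigContinuous2 u X f →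
    (∀ a ∈ A, f a = a) → ∀ x ∈ X, f x = x

/-- `A` is a minimal freezing set for `(X, c_u)`. -/
def MinFreezingSet2 (u : ℕ) (X A : Set (ℤ × ℤ)) : Prop :=
  FreezingSet2 u X A ∧ ∀ A' ⊂ A, ¬ FreezingSet2 u X A'

/-- `q` is a close `c_u`-neighbor of `p` in `X`. -/
def CloseNbr2 (u : ℕ) (X : Set (ℤ × ℤ)) (p q : ℤ × ℤ) : Prop :=
  p ∈ X ∧ q ∈ X ∧ p ≠ q ∧ ∀ x ∈ X, adj2 u x p → x = q ∨ adj2 u x q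

/-- A `c_u`-path of length `k` in `Y` from `a` to `b`. -/
def IsPathIn2 (u : ℕ) (Y : Set (ℤ × ℤ)) (k : ℕ) (s : Fin (k + 1) → ℤ × ℤ)
    (a b : ℤ × ℤ) : Prop :=
  (∀ i, s i ∈ Y) ∧ s 0 = a ∧ s (Fin.last k) = b ∧
    ∀ i : Fin k, s i.castSucc = s i.succ ∨ adj2 u (s i.castSucc) (s i.succ)

/-- `Y` is `c_u`-connected. -/
def ConnectedIn2 (u : ℕ) (Y : Set (ℤ × ℤ)) : Prop :=
  ∀ a ∈ Y, ∀ b ∈ Y, ∃ k s, IsPathIn2 u Y k s a b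

/-- `C` is a `c_u`-connected component of `Y`: a maximal `c_u`-connected subset. -/
def IsComponent2 (u : ℕ) (Y C : Set (ℤ × ℤ)) : Prop :=
  C ⊆ Y ∧ C.Nonempty ∧ ConnectedIn2 u C ∧
    ∀ C', C ⊆ C' → C' ⊆ Y → ConnectedIn2 u C' → C' = C

/-- `S` is a digital `c₂`-closed curve: the trace of an injective cyclic `c₂`-path. -/
def IsClosedCurve2 (S : Set (ℤ × ℤ)) : Prop :=
  ∃ m : ℕ, 0 < m ∧ ∃ s : ZMod m → ℤ × ℤ, Function.Injective s ∧ Set.range s = S ∧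
    ∀ i, s i = s (i + 1) ∨ adj2 2 (s i) (s (i + 1))

/-- `S` is a bounding curve of the digital disk `D`: `S` is a `c₂`-closed curve,
`ℤ² \ S` has exactly two `c₁`-components, one finite (the interior `I`) and one
infinite, and `D = S ∪ I`. -/
def IsBoundingCurve (S D : Set (ℤ × ℤ)) : Prop :=
  IsClosedCurve2 S ∧ ∃ I E : Set (ℤ × ℤ), I ≠ E ∧ I.Finite ∧ E.Infinite ∧
    {C | IsComponent2 1 Sᶜ C} = {I, E} ∧ D = S ∪ I

/-- A digital line segment: a `c₂`-connected set of two or more collinear points. -/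
def IsSegment2 (T : Set (ℤ × ℤ)) : Prop :=
  ConnectedIn2 2 T ∧ (∃ p ∈ T, ∃ q ∈ T, p ≠ q) ∧
    ∃ a b c : ℤ, ¬(a = 0 ∧ b = 0) ∧ ∀ p ∈ T, a * p.1 + b * p.2 = c

/-- A horizontal digital line segment. -/
def HorizSeg (T : Set (ℤ × ℤ)) : Prop := IsSegment2 T ∧ ∀ p ∈ T, ∀ q ∈ T, p.2 = q.2

/-- A vertical digital line segment. -/
def VertSeg (T : Set (ℤ × ℤ)) : Prop := IsSegment2 T ∧ ∀ p ∈ T, ∀ q ∈ T, p.1 = q.1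

/-- A slanted digital line segment (slope `1` or `-1`). -/
def SlantSeg (T : Set (ℤ × ℤ)) : Prop := IsSegment2 T ∧
  ((∀ p ∈ T, ∀ q ∈ T, p.1 - q.1 = p.2 - q.2) ∨ (∀ p ∈ T, ∀ q ∈ T, p.1 - q.1 = -(p.2 - q.2)))

/-- `T` is a maximal horizontal segment of the curve `S`. -/
def MaxHorizSegOf (S T : Set (ℤ × ℤ)) : Prop :=
  T ⊆ S ∧ HorizSeg T ∧ ∀ T', T ⊆ T' → T' ⊆ S → HorizSeg T' → T' = T

/-- `T` is a maximal vertical segment of the curve `S`. -/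
def MaxVertSegOf (S T : Set (ℤ × ℤ)) : Prop :=
  T ⊆ S ∧ VertSeg T ∧ ∀ T', T ⊆ T' → T' ⊆ S → VertSeg T' → T' = T

/-- `T` is a maximal slanted segment of the curve `S`. -/
def MaxSlantSegOf (S T : Set (ℤ × ℤ)) : Prop :=
  T ⊆ S ∧ SlantSeg T ∧ ∀ T', T ⊆ T' → T' ⊆ S → SlantSeg T' → T' = T

/-- `p` is an endpoint of the segment `T`: it has at most one `c₂`-neighbor in `T`. -/
def IsEndpointOf (T : Set (ℤ × ℤ)) (p : ℤ × ℤ) : Prop :=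
  p ∈ T ∧ {q ∈ T | adj2 2 p q}.Subsingleton

/-- The canonical embedding `ℤ² → ℝ²`. -/
def toR2 (p : ℤ × ℤ) : ℝ × ℝ := ((p.1 : ℝ), (p.2 : ℝ))

/-- `D` is digitally convex: `D = H ∩ ℤ²`, where `H` is the convex hull of `D` in `ℝ²`. -/
def DigitallyConvex (D : Set (ℤ × ℤ)) : Prop :=
  ∀ p : ℤ × ℤ, toR2 p ∈ convexHull ℝ (toR2 '' D) → p ∈ D

/-- A unit horizontal or vertical direction. -/
def isAxisDir (d : ℤ × ℤ) : Prop := (|d.1| = 1 ∧ d.2 = 0) ∨ (d.1 = 0 ∧ |d.2| = 1)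

/-- A unit diagonal direction. -/
def isDiagDir (d : ℤ × ℤ) : Prop := |d.1| = 1 ∧ |d.2| = 1

def dot2 (d e : ℤ × ℤ) : ℤ := d.1 * e.1 + d.2 * e.2

/-- `e` is a king-move direction lying strictly inside the angle (of measure less than
180°) with side directions `d₁` and `d₂`. -/
def InSector (d₁ d₂ e : ℤ × ℤ) : Prop :=
  (isAxisDir e ∨ isDiagDir e) ∧ 0 ≤ dot2 e d₁ ∧ 0 ≤ dot2 e d₂ ∧ e ≠ d₁ ∧ e ≠ d₂

/-- `c` lies strictly on the same side of the line through `T` as some point of `I`. -/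
def InteriorSideOf (T I : Set (ℤ × ℤ)) (c : ℤ × ℤ) : Prop :=
  ∃ a b k : ℤ, (∀ q ∈ T, a * q.1 + b * q.2 = k) ∧ k < a * c.1 + b * c.2 ∧
    ∃ w ∈ I, k < a * w.1 + b * w.2

/-- `X` is thick with respect to its bounding curve `S` (whose interior is `X \ S`):
(i) every non-endpoint `p` of a maximal slanted segment of `S` has a point `c ∈ X`,
`c₂`- but not `c₁`-adjacent to `p`, on the interior side of the segment;
(ii) every vertex of a 90° interior angle of `S` with horizontal and vertical sides has
a point of the interior `c₂`- but not `c₁`-adjacent to it, and every vertex of a 90°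
interior angle with slanted sides has a point of the interior `c₁`-adjacent to it;
(iii) every vertex `p` of a 135° interior angle of `S` has points `b, b' ∈ X` inside the
angle with `b` `c₂`- but not `c₁`-adjacent to `p` and `b'` `c₁`-adjacent to `p`.
A vertex with side directions `d₁, d₂` has an interior angle (of measure < 180°)
when some king direction strictly inside the angle leads into `X`. -/
def ThickWRT (X S : Set (ℤ × ℤ)) : Prop :=
  (∀ T, MaxSlantSegOf S T → ∀ p ∈ T, ¬IsEndpointOf T p →
      ∃ c ∈ X, adj2 2 c p ∧ ¬adj2 1 c p ∧ InteriorSideOf T (X \ S) c) ∧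
  ∃ m : ℕ, 0 < m ∧ ∃ s : ZMod m → ℤ × ℤ, Function.Injective s ∧ Set.range s = S ∧
    (∀ i, s i = s (i + 1) ∨ adj2 2 (s i) (s (i + 1))) ∧
    ∀ i : ZMod m,
      (isAxisDir (s (i - 1) - s i) ∧ isAxisDir (s (i + 1) - s i) ∧
          dot2 (s (i - 1) - s i) (s (i + 1) - s i) = 0 ∧
          (∃ e, InSector (s (i - 1) - s i) (s (i + 1) - s i) e ∧ s i + e ∈ X) →
        ∃ q ∈ X \ S, adj2 2 q (s i) ∧ ¬adj2 1 q (s i)) ∧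
      (isDiagDir (s (i - 1) - s i) ∧ isDiagDir (s (i + 1) - s i) ∧
          dot2 (s (i - 1) - s i) (s (i + 1) - s i) = 0 ∧
          (∃ e, InSector (s (i - 1) - s i) (s (i + 1) - s i) e ∧ s i + e ∈ X) →
        ∃ q ∈ X \ S, adj2 1 q (s i)) ∧
      (((isAxisDir (s (i - 1) - s i) ∧ isDiagDir (s (i + 1) - s i)) ∨
          (isDiagDir (s (i - 1) - s i) ∧ isAxisDir (s (i + 1) - s i))) ∧
          dot2 (s (i - 1) - s i) (s (i + 1) - s i) = -1 ∧
          (∃ e, InSector (s (i - 1) - s i) (s (i + 1) - s i) e ∧ s i + e ∈ X) →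
        ∃ b b' : ℤ × ℤ, InSector (s (i - 1) - s i) (s (i + 1) - s i) b ∧
          InSector (s (i - 1) - s i) (s (i + 1) - s i) b' ∧
          s i + b ∈ X ∧ s i + b' ∈ X ∧
          adj2 2 (s i + b) (s i) ∧ ¬adj2 1 (s i + b) (s i) ∧ adj2 1 (s i + b') (s i))

/-!
A slanted segment is a run of consecutive lattice points `u, u + (1, ε), …, u + n • (1, ε)` on a
diagonal, and its endpoints are its two extreme points. By `c₂`-continuity the images of these
points form a king path of `n` steps, which starts at `u` and ends at `u + n • (1, ε)` because `f`
fixes the endpoints. These ends are at Chebyshev distance `n`, and each coordinate has to move by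
exactly one unit at every step, so the path is the diagonal itself.
-/

section StepSequence

variable {g : ℕ → ℤ} {n : ℕ}

lemma abs_sub_le_of_abs_step_le_one (h : ∀ i < n, |g (i + 1) - g i| ≤ 1) {i j : ℕ}
    (hij : i ≤ j) (hjn : j ≤ n) : |g j - g i| ≤ j - i := by
  induction j, hij using Nat.le_induction with
  | base => simp
  | succ j hij ih =>
    have hstep := h j (by omega)
    have hprev := ih (by omega)
    rw [abs_le] at hstep hprev ⊢
    push_cast
    omega

lemma exists_eq_of_abs_step_le_one (h : ∀ i < n, |g (i + 1) - g i| ≤ 1) {t : ℤ}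
    (h0 : g 0 ≤ t) (hn : t ≤ g n) : ∃ i ≤ n, g i = t := by
  induction n with
  | zero => exact ⟨0, le_rfl, le_antisymm h0 hn⟩
  | succ m ih =>
    rcases le_or_gt t (g m) with hle | hlt
    · obtain ⟨i, hi, hgi⟩ := ih (fun i hi => h i (by omega)) hle
      exact ⟨i, by omega, hgi⟩
    · have hstep := h m (by omega)
      rw [abs_le] at hstep
      exact ⟨m + 1, le_rfl, by omega⟩

lemma eq_add_mul_of_abs_step_le_one (h : ∀ i < n, |g (i + 1) - g i| ≤ 1) {ε : ℤ}
    (hε : |ε| = 1) (hn : g n = g 0 + ε * n) {i : ℕ} (hi : i ≤ n) : g i = g 0 + ε * i := by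
  have hfirst := abs_sub_le_of_abs_step_le_one h (Nat.zero_le i) hi
  have hlast := abs_sub_le_of_abs_step_le_one h hi le_rfl
  rw [abs_le] at hfirst hlast
  rcases (abs_eq zero_le_one).1 hε with rfl | rfl <;> push_cast at * <;> omega

end StepSequence

lemma adj2_two_iff {x y : ℤ × ℤ} :
    adj2 2 x y ↔ x ≠ y ∧ |x.1 - y.1| ≤ 1 ∧ |x.2 - y.2| ≤ 1 :=
  ⟨fun ⟨hne, h1, h2, _⟩ => ⟨hne, h1, h2⟩,
    fun ⟨hne, h1, h2⟩ => ⟨hne, h1, h2, by split_ifs <;> norm_num⟩⟩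

lemma abs_sub_le_one_of_eq_or_adj2 {u : ℕ} {x y : ℤ × ℤ} (h : x = y ∨ adj2 u x y) :
    |y.1 - x.1| ≤ 1 ∧ |y.2 - x.2| ≤ 1 := by
  rcases h with rfl | ⟨-, h1, h2, -⟩
  · simp
  · rw [abs_sub_comm] at h1 h2
    exact ⟨h1, h2⟩

lemma adj2_two_add_smul (x : ℤ × ℤ) {ε t : ℤ} (hε : |ε| = 1) (ht : |t| = 1) :
    adj2 2 x (x + t • (1, ε)) := by
  refine adj2_two_iff.2 ⟨fun h => ?_, ?_, ?_⟩
  · have := congrArg Prod.fst h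
    simp_all
  · simp [ht]
  · simp [abs_mul, hε, ht]

lemma eq_add_smul_of_king_path {F : ℕ → ℤ × ℤ} {n : ℕ} {ε : ℤ} (hε : |ε| = 1)
    (hF : ∀ i < n, F i = F (i + 1) ∨ adj2 2 (F i) (F (i + 1)))
    (hn : F n = F 0 + (n : ℤ) • (1, ε)) {i : ℕ} (hi : i ≤ n) :
    F i = F 0 + (i : ℤ) • (1, ε) := by
  have hstep i (hi : i < n) := abs_sub_le_one_of_eq_or_adj2 (hF i hi)
  refine Prod.ext ?_ ?_
  · have := eq_add_mul_of_abs_step_le_one (g := fun i => (F i).1) (fun i hi => (hstep i hi).1)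
      (abs_one) (by simpa [add_comm] using congrArg Prod.fst hn) hi
    simpa [add_comm] using this
  · have := eq_add_mul_of_abs_step_le_one (g := fun i => (F i).2) (fun i hi => (hstep i hi).2)
      hε (by simpa [mul_comm] using congrArg Prod.snd hn) hi
    simpa [mul_comm] using this

lemma IsPathIn2.exists_seq {u k : ℕ} {Y : Set (ℤ × ℤ)} {s : Fin (k + 1) → ℤ × ℤ}
    {p q : ℤ × ℤ} (h : IsPathIn2 u Y k s p q) :
    ∃ g : ℕ → ℤ × ℤ, g 0 = p ∧ g k = q ∧ (∀ i, g i ∈ Y) ∧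
      ∀ i < k, g i = g (i + 1) ∨ adj2 u (g i) (g (i + 1)) := by
  obtain ⟨hmem, h0, hlast, hstep⟩ := h
  refine ⟨fun i => s ⟨min i k, by omega⟩, ?_, ?_, fun i => hmem _, fun i hik => ?_⟩
  · simpa using h0
  · simpa [Fin.last] using hlast
  · have hcur : (⟨min i k, by omega⟩ : Fin (k + 1)) = (⟨i, hik⟩ : Fin k).castSucc := by
      ext; simp; omega
    have hnext : (⟨min (i + 1) k, by omega⟩ : Fin (k + 1)) = (⟨i, hik⟩ : Fin k).succ := by
      ext; simp; omega
    simpa only [hcur, hnext] using hstep ⟨i, hik⟩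

lemma ConnectedIn2.exists_fst_eq {u : ℕ} {Y : Set (ℤ × ℤ)} (hY : ConnectedIn2 u Y)
    {p q : ℤ × ℤ} (hp : p ∈ Y) (hq : q ∈ Y) {t : ℤ} (hpt : p.1 ≤ t) (htq : t ≤ q.1) :
    ∃ r ∈ Y, r.1 = t := by
  obtain ⟨k, s, hs⟩ := hY p hp q hq
  obtain ⟨g, rfl, rfl, hgY, hg⟩ := hs.exists_seq
  obtain ⟨i, -, hi⟩ := exists_eq_of_abs_step_le_one (g := fun i => (g i).1)
    (fun i hi => (abs_sub_le_one_of_eq_or_adj2 (hg i hi)).1) hpt htq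
  exact ⟨g i, hgY i, hi⟩

namespace SlantSeg

variable {P : Set (ℤ × ℤ)}

lemma exists_slope (hP : SlantSeg P) {o : ℤ × ℤ} (ho : o ∈ P) :
    ∃ ε : ℤ, |ε| = 1 ∧ ∀ p ∈ P, p = o + (p.1 - o.1) • (1, ε) := by
  rcases hP.2 with h | h
  · exact ⟨1, abs_one, fun p hp => Prod.ext (by simp) (by simp; linarith [h p hp o ho])⟩
  · exact ⟨-1, by simp, fun p hp => Prod.ext (by simp) (by simp; linarith [h p hp o ho])⟩

lemma eq_of_fst_eq (hP : SlantSeg P) {p q : ℤ × ℤ} (hp : p ∈ P) (hq : q ∈ P)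
    (h : p.1 = q.1) : p = q := by
  obtain ⟨ε, -, hline⟩ := hP.exists_slope hp
  rw [hline q hq, h]
  simp

lemma add_smul_mem (hP : SlantSeg P) {o : ℤ × ℤ} {ε : ℤ}
    (hline : ∀ p ∈ P, p = o + (p.1 - o.1) • (1, ε)) {p q : ℤ × ℤ} (hp : p ∈ P) (hq : q ∈ P)
    {t : ℤ} (hpt : p.1 ≤ o.1 + t) (htq : o.1 + t ≤ q.1) : o + t • (1, ε) ∈ P := by
  obtain ⟨r, hr, hrt⟩ := hP.1.1.exists_fst_eq hp hq hpt htq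
  convert hr using 1
  rw [hline r hr, hrt]
  simp

lemma _root_.IsEndpointOf.fst_extremal (hP : SlantSeg P) {e : ℤ × ℤ} (he : IsEndpointOf P e) :
    (∀ p ∈ P, p.1 ≤ e.1) ∨ ∀ p ∈ P, e.1 ≤ p.1 := by
  obtain ⟨ε, hε, hline⟩ := hP.exists_slope he.1
  by_contra! ⟨⟨p, hp, hep⟩, q, hq, hqe⟩
  have hnbr (t : ℤ) (ht : |t| = 1) : e + t • (1, ε) ∈ {r ∈ P | adj2 2 e r} := by
    have ht' := (abs_eq zero_le_one).1 ht
    exact ⟨hP.add_smul_mem hline hq hp (by omega) (by omega), adj2_two_add_smul e hε ht⟩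
  have := congrArg Prod.fst (he.2 (hnbr 1 abs_one) (hnbr (-1) (by simp)))
  simp at this

lemma apply_eq_self_of_fst_between (hP : SlantSeg P) {X : Set (ℤ × ℤ)} (hPX : P ⊆ X)
    {f : ℤ × ℤ → ℤ × ℤ} (hf : DigContinuous2 2 X f) {u v x : ℤ × ℤ} (hu : u ∈ P) (hv : v ∈ P)
    (hfu : f u = u) (hfv : f v = v) (hx : x ∈ P) (hux : u.1 ≤ x.1) (hxv : x.1 ≤ v.1) :
    f x = x := by
  obtain ⟨ε, hε, hline⟩ := hP.exists_slope hu
  set n := (v.1 - u.1).toNat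
  have hn : ((n : ℕ) : ℤ) = v.1 - u.1 := by omega
  let c : ℕ → ℤ × ℤ := fun i => u + (i : ℤ) • (1, ε)
  have hcP (i : ℕ) (hi : i ≤ n) : c i ∈ P := hP.add_smul_mem hline hu hv (by omega) (by omega)
  have hc0 : c 0 = u := by simp [c]
  have hcv : c n = v := by rw [hline v hv, ← hn]
  have hchain (i : ℕ) (hi : i < n) : adj2 2 (c i) (c (i + 1)) := by
    have hsucc : c (i + 1) = c i + (1 : ℤ) • (1, ε) := by simp only [c]; push_cast; module
    rw [hsucc]
    exact adj2_two_add_smul (c i) hε abs_one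
  have hfc (i : ℕ) (hi : i ≤ n) : f (c i) = c i := by
    have := eq_add_smul_of_king_path (F := fun i => f (c i)) hε
      (fun j hj => hf _ (hPX (hcP j hj.le)) _ (hPX (hcP (j + 1) hj)) (hchain j hj))
      (by rw [hcv, hfv, hc0, hfu]; exact hcv.symm) hi
    rwa [hc0, hfu] at this
  have hxc : x = c (x.1 - u.1).toNat := by
    conv_lhs => rw [hline x hx]
    simp only [c]
    congr 2
    omega
  rw [hxc]
  exact hfc _ (by omega)

end SlantSeg

theorem slanted_segment_frozen_general (X P : Set (ℤ × ℤ)) (hPX : P ⊆ X)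
    (hseg : SlantSeg P) (a b : ℤ × ℤ) (hab : a ≠ b)
    (ha : IsEndpointOf P a) (hb : IsEndpointOf P b)
    (f : ℤ × ℤ → ℤ × ℤ) (hcont : DigContinuous2 2 X f)
    (hfa : f a = a) (hfb : f b = b) :
    ∀ x ∈ P, f x = x := by
  intro x hx
  have hne : a.1 ≠ b.1 := fun h => hab (hseg.eq_of_fst_eq ha.1 hb.1 h)
  rcases ha.fst_extremal hseg with hA | hA <;> rcases hb.fst_extremal hseg with hB | hB
  · exact absurd (le_antisymm (hB a ha.1) (hA b hb.1)) hne
  · exact hseg.apply_eq_self_of_fst_between hPX hcont hb.1 ha.1 hfb hfa hx (hB x hx) (hA x hx)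
  · exact hseg.apply_eq_self_of_fst_between hPX hcont ha.1 hb.1 hfa hfb hx (hA x hx) (hB x hx)
  · exact absurd (le_antisymm (hA b hb.1) (hB a ha.1)) hne

/-- If `a, b ∈ X ⊆ ℤ²` are the (distinct) endpoints of a slanted digital line segment
`P ⊆ X` and `f : X → X` is `c₂`-continuous with `f a = a` and `f b = b`, then `f`
fixes every point of `P`. -/
theorem slanted_segment_frozen (X P : Set (ℤ × ℤ)) (hPX : P ⊆ X)
    (hseg : SlantSeg P) (a b : ℤ × ℤ) (hab : a ≠ b)
    (ha : IsEndpointOf P a) (hb : IsEndpointOf P b)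
    (f : ℤ × ℤ → ℤ × ℤ) (hmaps : Set.MapsTo f X X) (hcont : DigContinuous2 2 X f)
    (hfa : f a = a) (hfb : f b = b) :
    ∀ x ∈ P, f x = x :=
  slanted_segment_frozen_general X P hPX hseg a b hab ha hb f hcont hfa hfb
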